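/- Define the SDC key rate in the correlated-channel scenario by r(q) = 2 − h₄(q/2·(1−q/2), (1−q/2)·q/2, q²/4) − h₄(q/4, q/4, q/4), where h₄(a,b,c) := −a·log₂a − b·log₂b − c·log₂c − (1−a−b−c)·log₂(1−a−b−c). Then r is strictly decreasing on (0, 1/2) and has a unique zero q₀ with q₀/2 ∈ (0.117, 0.119). -/

import Mathlib

open Real

/-- 4-ary entropy of the distribution `(1−a−b−c, a, b, c)` (with `0·log 0 = 0`). -/
noncomputable def h4 (a b c : ℝ) : ℝ :=
  -(a * logb 2 a) - (b * logb 2 b) - (c * logb 2 c) -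
    ((1 - a - b - c) * logb 2 (1 - a - b - c))

/-- The SDC key rate in the correlated-channel scenario. -/
noncomputable def sdcRate (q : ℝ) : ℝ :=
  2 - h4 (q/2 * (1 - q/2)) ((1 - q/2) * (q/2)) (q^2/4) - h4 (q/4) (q/4) (q/4)

noncomputable def sdcF (q : ℝ) : ℝ :=
  2 + (q * log (q/2) + (2-q) * log (1-q/2) + 3*q/4 * log (q/4)
        + (1-3*q/4) * log (1-3*q/4)) / log 2

lemma sdc_eq_F {q : ℝ} (h0 : 0 < q) (h1 : q < 1/2) : sdcRate q = sdcF q := by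
  have h2 : (0:ℝ) < q/2 := by linarith
  have h3 : (0:ℝ) < 1 - q/2 := by linarith
  have h4p : (0:ℝ) < q/4 := by linarith
  have h5 : (0:ℝ) < 1 - 3*q/4 := by linarith
  have hL : (0:ℝ) < log 2 := Real.log_pos (by norm_num)
  have l1 : log (q/2 * (1 - q/2)) = log (q/2) + log (1 - q/2) :=
    Real.log_mul h2.ne' h3.ne'
  have l2 : log ((1 - q/2) * (q/2)) = log (1 - q/2) + log (q/2) :=
    Real.log_mul h3.ne' h2.ne'
  have l3 : log (q^2/4) = 2 * log (q/2) := by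
    rw [show q^2/4 = (q/2)^2 by ring, Real.log_pow]; norm_num
  have l4 : (1 - q/2 * (1 - q/2) - (1 - q/2) * (q/2) - q^2/4) = (1 - q/2)^2 := by ring
  have l4' : log ((1 - q/2)^2) = 2 * log (1 - q/2) := by rw [Real.log_pow]; norm_num
  have l5 : (1 - q/4 - q/4 - q/4) = 1 - 3*q/4 := by ring
  unfold sdcRate h4 sdcF Real.logb
  rw [l1, l2, l3, l4, l4', l5]
  field_simp
  ring

lemma sdcF_hasDeriv {q : ℝ} (h0 : 0 < q) (h1 : q < 1/2) :
    HasDerivAt sdcF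
      ((log (q/2) - log (1-q/2) + 3/4 * (log (q/4) - log (1-3*q/4))) / log 2) q := by
  have h2 : (0:ℝ) < q/2 := by linarith
  have h3 : (0:ℝ) < 1 - q/2 := by linarith
  have h4p : (0:ℝ) < q/4 := by linarith
  have h5 : (0:ℝ) < 1 - 3*q/4 := by linarith
  have hL : (0:ℝ) < log 2 := Real.log_pos (by norm_num)
  have T1 : HasDerivAt (fun x : ℝ => x * log (x/2))
      (1 * log (q/2) + q * ((1/2) / (q/2))) q :=
    (hasDerivAt_id q).mul (((hasDerivAt_id q).div_const 2).log h2.ne')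
  have T2 : HasDerivAt (fun x : ℝ => (2 - x) * log (1 - x/2))
      ((0 - 1) * log (1 - q/2) + (2 - q) * ((0 - 1/2) / (1 - q/2))) q :=
    ((hasDerivAt_const q 2).sub (hasDerivAt_id q)).mul
      (((hasDerivAt_const q 1).sub ((hasDerivAt_id q).div_const 2)).log h3.ne')
  have T3 : HasDerivAt (fun x : ℝ => 3*x/4 * log (x/4))
      (3*1/4 * log (q/4) + 3*q/4 * ((1/4) / (q/4))) q :=
    (((hasDerivAt_id q).const_mul 3).div_const 4).mul
      (((hasDerivAt_id q).div_const 4).log h4p.ne')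
  have T4 : HasDerivAt (fun x : ℝ => (1 - 3*x/4) * log (1 - 3*x/4))
      ((0 - 3*1/4) * log (1 - 3*q/4) + (1 - 3*q/4) * ((0 - 3*1/4) / (1 - 3*q/4))) q :=
    ((hasDerivAt_const q 1).sub (((hasDerivAt_id q).const_mul 3).div_const 4)).mul
      (((hasDerivAt_const q 1).sub (((hasDerivAt_id q).const_mul 3).div_const 4)).log h5.ne')
  have hsum := ((((T1.add T2).add T3).add T4).div_const (log 2)).const_add 2
  have hF : HasDerivAt sdcF
      ((1 * log (q/2) + q * ((1/2) / (q/2)) +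
        ((0 - 1) * log (1 - q/2) + (2 - q) * ((0 - 1/2) / (1 - q/2))) +
        (3*1/4 * log (q/4) + 3*q/4 * ((1/4) / (q/4))) +
        ((0 - 3*1/4) * log (1 - 3*q/4) + (1 - 3*q/4) * ((0 - 3*1/4) / (1 - 3*q/4)))) / log 2) q := by
    unfold sdcF; exact hsum
  have hA : (2:ℝ) - q ≠ 0 := by linarith
  have hB : (4:ℝ) - 3*q ≠ 0 := by linarith
  have e1 : q * ((1/2:ℝ) / (q/2)) = 1 := by
    field_simp [h0.ne']
  have e2 : ((2:ℝ) - q) * ((0 - 1/2) / (1 - q/2)) = -1 := by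
    field_simp [h3.ne']
    ring
  have e3 : 3*q/4 * ((1/4:ℝ) / (q/4)) = 3/4 := by
    field_simp [h0.ne']
  have e4 : ((1:ℝ) - 3*q/4) * ((0 - 3*1/4) / (1 - 3*q/4)) = -(3/4) := by
    field_simp [h5.ne', hB]
    ring
  rw [e1, e2, e3, e4] at hF
  convert hF using 1
  ring

lemma sdcF_deriv_neg {q : ℝ} (h0 : 0 < q) (h1 : q < 1/2) :
    (log (q/2) - log (1-q/2) + 3/4 * (log (q/4) - log (1-3*q/4))) / log 2 < 0 := by
  have h2 : (0:ℝ) < q/2 := by linarith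
  have h4p : (0:ℝ) < q/4 := by linarith
  have hL : (0:ℝ) < log 2 := Real.log_pos (by norm_num)
  have a1 : log (q/2) < log (1 - q/2) := Real.log_lt_log h2 (by linarith)
  have a2 : log (q/4) < log (1 - 3*q/4) := Real.log_lt_log h4p (by linarith)
  apply div_neg_of_neg_of_pos _ hL
  linarith

lemma sdcF_anti : StrictAntiOn sdcF (Set.Ioo 0 (1/2)) := by
  apply strictAntiOn_of_deriv_neg (convex_Ioo _ _)
  · exact fun x hx => (sdcF_hasDeriv hx.1 hx.2).continuousAt.continuousWithinAt
  · intro x hx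
    rw [interior_Ioo] at hx
    rw [(sdcF_hasDeriv hx.1 hx.2).deriv]
    exact sdcF_deriv_neg hx.1 hx.2

lemma log_lower {x y : ℝ} (n : ℕ) (hy : 0 < y) (h : y^n ≤ x) :
    (n:ℝ) * (1 - 1/y) ≤ Real.log x := by
  have hx : 0 < x := lt_of_lt_of_le (pow_pos hy n) h
  have h1 : Real.log (y^n) ≤ Real.log x := Real.log_le_log (pow_pos hy n) h
  rw [Real.log_pow] at h1
  have h2 : Real.log (1/y) ≤ 1/y - 1 := Real.log_le_sub_one_of_pos (by positivity)
  rw [Real.log_div one_ne_zero hy.ne', Real.log_one] at h2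
  nlinarith

lemma log_upper {x z : ℝ} (n : ℕ) (hx : 0 < x) (hz : 0 < z) (h : x ≤ z^n) :
    Real.log x ≤ (n:ℝ) * (z - 1) := by
  have h1 : Real.log x ≤ Real.log (z^n) := Real.log_le_log hx h
  rw [Real.log_pow] at h1
  nlinarith [Real.log_le_sub_one_of_pos hz]

lemma sdcF_pos : 0 < sdcF 0.234 := by
  have hL : (0:ℝ) < log 2 := Real.log_pos (by norm_num)
  have b1 : (512:ℝ) * (1 - 1/(995818179/1000000000)) ≤ log ((0.234:ℝ)/2) :=
    log_lower 512 (by norm_num) (by rw [show (512:ℕ) = 2 * 256 from rfl, pow_mul]; norm_num)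
  have b2 : (64:ℝ) * (1 - 1/(249514417/250000000)) ≤ log (1 - (0.234:ℝ)/2) :=
    log_lower 64 (by norm_num) (by norm_num)
  have b3 : (512:ℝ) * (1 - 1/(19889419/20000000)) ≤ log ((0.234:ℝ)/4) :=
    log_lower 512 (by norm_num) (by rw [show (512:ℕ) = 2 * 256 from rfl, pow_mul]; norm_num)
  have b4 : (64:ℝ) * (1 - 1/(498494629/500000000)) ≤ log (1 - 3*(0.234:ℝ)/4) :=
    log_lower 64 (by norm_num) (by norm_num)
  have hL9 : (0.6931471803:ℝ) < log 2 := Real.log_two_gt_d9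
  have key : -2 * log 2 < (0.234:ℝ) * log ((0.234:ℝ)/2) + (2-0.234) * log (1-(0.234:ℝ)/2)
      + 3*(0.234:ℝ)/4 * log ((0.234:ℝ)/4) + (1-3*(0.234:ℝ)/4) * log (1-3*(0.234:ℝ)/4) := by
    nlinarith [b1, b2, b3, b4, hL9]
  unfold sdcF
  have h2 : -2 < ((0.234:ℝ) * log ((0.234:ℝ)/2) + (2-0.234) * log (1-(0.234:ℝ)/2)
      + 3*(0.234:ℝ)/4 * log ((0.234:ℝ)/4) + (1-3*(0.234:ℝ)/4) * log (1-3*(0.234:ℝ)/4)) / log 2 :=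
    (lt_div_iff₀ hL).mpr (by linarith)
  linarith

lemma sdcF_neg : sdcF 0.238 < 0 := by
  have hL : (0:ℝ) < log 2 := Real.log_pos (by norm_num)
  have b1 : log ((0.238:ℝ)/2) ≤ (512:ℝ) * ((995851147/1000000000) - 1) :=
    log_upper 512 (by norm_num) (by norm_num) (by rw [show (512:ℕ) = 2 * 256 from rfl, pow_mul]; norm_num)
  have b2 : log (1 - (0.238:ℝ)/2) ≤ (64:ℝ) * ((249505577/250000000) - 1) :=
    log_upper 64 (by norm_num) (by norm_num) (by norm_num)
  have b3 : log ((0.238:ℝ)/4) ≤ (512:ℝ) * ((994503873/1000000000) - 1) :=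
    log_upper 512 (by norm_num) (by norm_num) (by rw [show (512:ℕ) = 2 * 256 from rfl, pow_mul]; norm_num)
  have b4 : log (1 - 3*(0.238:ℝ)/4) ≤ (64:ℝ) * ((39877299/40000000) - 1) :=
    log_upper 64 (by norm_num) (by norm_num) (by norm_num)
  have hL9 : log 2 < (0.6931471808:ℝ) := Real.log_two_lt_d9
  have key : (0.238:ℝ) * log ((0.238:ℝ)/2) + (2-0.238) * log (1-(0.238:ℝ)/2)
      + 3*(0.238:ℝ)/4 * log ((0.238:ℝ)/4) + (1-3*(0.238:ℝ)/4) * log (1-3*(0.238:ℝ)/4)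
      < -2 * log 2 := by
    nlinarith [b1, b2, b3, b4, hL9]
  unfold sdcF
  have h2 : ((0.238:ℝ) * log ((0.238:ℝ)/2) + (2-0.238) * log (1-(0.238:ℝ)/2)
      + 3*(0.238:ℝ)/4 * log ((0.238:ℝ)/4) + (1-3*(0.238:ℝ)/4) * log (1-3*(0.238:ℝ)/4)) / log 2
      < -2 := (div_lt_iff₀ hL).mpr (by linarith)
  linarith

/-- The SDC key rate is strictly decreasing on `(0, 1/2)` and has a unique zero `q₀` there,
whose corresponding error rate `q₀/2` lies strictly between 11.7% and 11.9%. -/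
theorem sdc_threshold :
    StrictAntiOn sdcRate (Set.Ioo 0 (1/2)) ∧
    ∃ q₀ ∈ Set.Ioo (0:ℝ) (1/2), sdcRate q₀ = 0 ∧
      (∀ q ∈ Set.Ioo (0:ℝ) (1/2), sdcRate q = 0 → q = q₀) ∧
      q₀ / 2 ∈ Set.Ioo (0.117 : ℝ) 0.119 := by
  have hanti : StrictAntiOn sdcRate (Set.Ioo 0 (1/2)) := by
    intro a ha b hb hab
    rw [sdc_eq_F ha.1 ha.2, sdc_eq_F hb.1 hb.2]
    exact sdcF_anti ha hb hab
  refine ⟨hanti, ?_⟩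
  have hsub : Set.Icc (0.234:ℝ) 0.238 ⊆ Set.Ioo (0:ℝ) (1/2) := by
    intro x hx; exact ⟨by linarith [hx.1], by linarith [hx.2]⟩
  have hcont : ContinuousOn sdcF (Set.Icc (0.234:ℝ) 0.238) := fun x hx =>
    ((sdcF_hasDeriv (hsub hx).1 (hsub hx).2).continuousAt).continuousWithinAt
  have hIVT := intermediate_value_Icc' (by norm_num : (0.234:ℝ) ≤ 0.238) hcont
  have h0mem : (0:ℝ) ∈ Set.Icc (sdcF 0.238) (sdcF 0.234) :=
    ⟨le_of_lt sdcF_neg, le_of_lt sdcF_pos⟩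
  obtain ⟨q₀, hq₀Icc, hFq₀⟩ := hIVT h0mem
  have hq₀Ioo : q₀ ∈ Set.Ioo (0:ℝ) (1/2) := hsub hq₀Icc
  have hne1 : q₀ ≠ 0.234 := by
    intro h; rw [h] at hFq₀; exact absurd hFq₀ (ne_of_gt sdcF_pos)
  have hne2 : q₀ ≠ 0.238 := by
    intro h; rw [h] at hFq₀; exact absurd hFq₀ (ne_of_lt sdcF_neg)
  have hlt1 : (0.234:ℝ) < q₀ := lt_of_le_of_ne hq₀Icc.1 (Ne.symm hne1)
  have hlt2 : q₀ < 0.238 := lt_of_le_of_ne hq₀Icc.2 hne2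
  have hroot : sdcRate q₀ = 0 := by rw [sdc_eq_F hq₀Ioo.1 hq₀Ioo.2]; exact hFq₀
  refine ⟨q₀, hq₀Ioo, hroot, ?_, by constructor <;> [linarith; linarith]⟩
  intro q hq hq0
  rcases lt_trichotomy q q₀ with h | h | h
  · have := hanti hq hq₀Ioo h; rw [hq0, hroot] at this; linarith
  · exact h
  · have := hanti hq₀Ioo hq h; rw [hq0, hroot] at this; linarith
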